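/- For odd n, s_{ρ_{n−1} + 1^{n−1}}(t_2,...,t_n | t_1,−z_1,...,t_{n−1},−z_{n−1}) = ∏_{j=2}^{n}(t_j − t_1) · ∏_{1≤i<j≤n}(t_j + z_i), where ρ_{n−1}+1^{n−1} = (n, n−1, ..., 2) has n−1 parts. -/
import Mathlib

open Finset

private lemma prod_range_two_mul {R : Type*} [CommRing R] (K : ℕ) (f : ℕ → R) :
    ∏ m ∈ Finset.range (2 * K), f m = ∏ k ∈ Finset.range K, (f (2 * k) * f (2 * k + 1)) := by
  induction K with
  | zero => simp
  | succ K ih =>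
    have h2 : 2 * (K + 1) = 2 * K + 1 + 1 := by ring
    rw [h2, Finset.prod_range_succ, Finset.prod_range_succ, ih, Finset.prod_range_succ,
      mul_assoc]

private lemma sign_revPerm_eq :
    ∀ N : ℕ, Equiv.Perm.sign (Fin.revPerm : Equiv.Perm (Fin N)) = (-1) ^ (N * (N - 1) / 2)
  | 0 => by
      have : (Fin.revPerm : Equiv.Perm (Fin 0)) = 1 := by
        ext x; exact absurd x.2 (by omega)
      simp [this]
  | (N + 1) => by
      have hdec : (Fin.revPerm : Equiv.Perm (Fin (N + 1)))
          = finRotate (N + 1)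
            * Equiv.permCongr finSuccEquivLast.symm
                (Equiv.optionCongr (Fin.revPerm : Equiv.Perm (Fin N))) := by
        ext x
        refine Fin.lastCases ?_ (fun i => ?_) x
        · simp [Equiv.permCongr_apply]
        · simp only [Equiv.Perm.mul_apply, Equiv.permCongr_apply, Equiv.symm_symm,
            finSuccEquivLast_castSucc, Equiv.optionCongr_apply, Option.map_some,
            finSuccEquivLast_symm_some, finRotate_succ_apply, Fin.revPerm_apply]
          rw [Fin.val_add_one_of_lt (Fin.castSucc_lt_last _)]
          simp only [Fin.val_rev, Fin.coe_castSucc]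
          omega
      rw [hdec, map_mul, sign_finRotate, Equiv.Perm.sign_permCongr, Equiv.optionCongr_sign,
        sign_revPerm_eq N, ← pow_add]
      congr 1
      rcases N with _ | M
      · simp
      · have h : (M + 1 + 1) * (M + 1 + 1 - 1) = (M + 1) * (M + 1 - 1) + 2 * (M + 1) := by
          simp only [Nat.add_sub_cancel]
          ring
        have he : 2 ∣ (M + 1) * (M + 1 - 1) := by
          simp only [Nat.add_sub_cancel, mul_comm (M + 1) M]
          exact (Nat.even_mul_succ_self M).two_dvd
        omega

private lemma prod_pairs {R : Type*} [CommRing R] (K : ℕ) (g : ℕ → ℕ → R) :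
    ∏ p ∈ Finset.univ.filter (fun p : Fin K × Fin K => p.1 < p.2), g p.1 p.2
      = ∏ j ∈ Finset.range K, ∏ i ∈ Finset.range j, g i j := by
  rw [Finset.prod_sigma' (Finset.range K) (fun j => Finset.range j) (fun j i => g i j)]
  symm
  refine Finset.prod_bij (fun x hx =>
    ((⟨x.2, ?_⟩ : Fin K), (⟨x.1, ?_⟩ : Fin K))) ?_ ?_ ?_ ?_
  · have := Finset.mem_sigma.mp hx
    simp only [Finset.mem_range] at this
    omega
  · have := Finset.mem_sigma.mp hx
    simp only [Finset.mem_range] at this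
    omega
  · intro a ha
    have := Finset.mem_sigma.mp ha
    simp only [Finset.mem_range] at this
    simp only [Finset.mem_filter, Finset.mem_univ, true_and]
    exact Fin.mk_lt_mk.mpr (by omega)
  · intro a ha b hb hab
    simp only [Prod.mk.injEq, Fin.mk.injEq] at hab
    obtain ⟨a1, a2⟩ := a
    obtain ⟨b1, b2⟩ := b
    simp only at hab
    simp [hab.1, hab.2]
  · intro b hb
    simp only [Finset.mem_filter, Finset.mem_univ, true_and] at hb
    refine ⟨⟨(b.2 : ℕ), (b.1 : ℕ)⟩, Finset.mem_sigma.mpr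
      ⟨Finset.mem_range.mpr b.2.is_lt, Finset.mem_range.mpr hb⟩, ?_⟩
    rfl
  · intro a ha
    rfl

private lemma key_det {R : Type*} [CommRing R] (N : ℕ) (t z : ℕ → R) :
    Matrix.det (Matrix.of (fun i j : Fin N =>
        ∏ m ∈ Finset.range (2 * (N - (i : ℕ))),
          (t ((j : ℕ) + 1) - (if m % 2 = 0 then t (m / 2) else -z (m / 2)))))
      =
      (∏ p ∈ Finset.univ.filter (fun p : Fin N × Fin N => p.1 < p.2),
          (t ((p.1 : ℕ) + 1) - t ((p.2 : ℕ) + 1)))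
        * ((∏ j ∈ Finset.range N, (t (j + 1) - t 0))
            * ∏ p ∈ Finset.univ.filter (fun p : Fin (N + 1) × Fin (N + 1) => p.1 < p.2),
                (t (p.2 : ℕ) + z (p.1 : ℕ))) := by
  set E := N * (N - 1) / 2 with hE
  -- rewrite the matrix entries as paired products
  have hM : (Matrix.of (fun i j : Fin N =>
        ∏ m ∈ Finset.range (2 * (N - (i : ℕ))),
          (t ((j : ℕ) + 1) - (if m % 2 = 0 then t (m / 2) else -z (m / 2)))))
      = Matrix.of (fun i j : Fin N => ∏ k ∈ Finset.range (N - (i : ℕ)),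
          ((t ((j : ℕ) + 1) - t k) * (t ((j : ℕ) + 1) + z k))) := by
    ext i j
    simp only [Matrix.of_apply]
    rw [prod_range_two_mul]
    refine Finset.prod_congr rfl fun k _ => ?_
    have h0 : 2 * k % 2 = 0 := by omega
    have h1 : 2 * k / 2 = k := by omega
    have h2 : (2 * k + 1) % 2 = 1 := by omega
    have h3 : (2 * k + 1) / 2 = k := by omega
    rw [h0, h1, h2, h3]
    simp [sub_neg_eq_add]
  conv_lhs => rw [hM]
  set M : Matrix (Fin N) (Fin N) R := Matrix.of (fun i j : Fin N =>
      ∏ k ∈ Finset.range (N - (i : ℕ)),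
        ((t ((j : ℕ) + 1) - t k) * (t ((j : ℕ) + 1) + z k))) with hMdef
  -- the reversed-rows matrix is upper triangular
  have hrev : ∀ i : Fin N, N - ((Fin.revPerm i : Fin N) : ℕ) = (i : ℕ) + 1 := by
    intro i
    have := i.is_lt
    simp only [Fin.revPerm_apply, Fin.val_rev]
    omega
  have htri : (M.submatrix Fin.revPerm id).BlockTriangular id := by
    intro i j hij
    simp only [id] at hij
    simp only [Matrix.submatrix_apply, hMdef, Matrix.of_apply, id_eq, hrev i]
    refine Finset.prod_eq_zero (Finset.mem_range.mpr (show (j : ℕ) + 1 < (i : ℕ) + 1 by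
      exact Nat.add_lt_add_right hij 1)) ?_
    simp
  have hdetsub : (M.submatrix Fin.revPerm id).det = ∏ i : Fin N, M (Fin.revPerm i) i := by
    rw [Matrix.det_of_upperTriangular htri]
    exact Finset.prod_congr rfl fun i _ => rfl
  have hperm := Matrix.det_permute (Fin.revPerm : Equiv.Perm (Fin N)) M
  have hsign : ((Equiv.Perm.sign (Fin.revPerm : Equiv.Perm (Fin N)) : ℤ) : R) = (-1) ^ E := by
    rw [sign_revPerm_eq, hE]
    push_cast
    rfl
  have hss : ((-1 : R) ^ E) * ((-1 : R) ^ E) = 1 := by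
    rw [← pow_add, ← two_mul, pow_mul]
    norm_num
  have hdet : M.det = (-1 : R) ^ E * ∏ i : Fin N, M (Fin.revPerm i) i := by
    rw [← hdetsub, hperm, hsign, ← mul_assoc, hss, one_mul]
  rw [hdet]
  -- antidiagonal product as a range product
  have hdiag : (∏ i : Fin N, M (Fin.revPerm i) i)
      = ∏ i ∈ Finset.range N, ∏ k ∈ Finset.range (i + 1),
          ((t (i + 1) - t k) * (t (i + 1) + z k)) := by
    rw [← Fin.prod_univ_eq_prod_range (fun i : ℕ => ∏ k ∈ Finset.range (i + 1),
        ((t (i + 1) - t k) * (t (i + 1) + z k)))]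
    refine Finset.prod_congr rfl fun i _ => ?_
    simp only [hMdef, Matrix.of_apply, hrev i]
  rw [hdiag]
  -- rewrite the RHS pair products
  rw [prod_pairs N (fun i j => t (i + 1) - t (j + 1)),
    prod_pairs (N + 1) (fun i j => t j + z i)]
  -- Fin (N+1) product: drop the empty j = 0 factor
  rw [Finset.prod_range_succ' (fun j => ∏ i ∈ Finset.range j, (t j + z i)) N]
  simp only [Finset.range_zero, Finset.prod_empty, mul_one]
  -- split LHS double product into t-part and z-part
  simp only [Finset.prod_mul_distrib]
  -- split off the k = 0 factor of the t-part
  rw [show (∏ i ∈ Finset.range N, ∏ k ∈ Finset.range (i + 1), (t (i + 1) - t k))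
      = ∏ i ∈ Finset.range N, ((∏ k ∈ Finset.range i, (t (i + 1) - t (k + 1))) * (t (i + 1) - t 0))
    from Finset.prod_congr rfl fun i _ => Finset.prod_range_succ' _ i]
  rw [Finset.prod_mul_distrib]
  -- reverse the Vandermonde on the RHS
  have hvand : (∏ j ∈ Finset.range N, ∏ i ∈ Finset.range j, (t (i + 1) - t (j + 1)))
      = (-1 : R) ^ E * ∏ j ∈ Finset.range N, ∏ i ∈ Finset.range j, (t (j + 1) - t (i + 1)) := by
    have step : ∀ j, (∏ i ∈ Finset.range j, (t (i + 1) - t (j + 1)))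
        = (-1 : R) ^ j * ∏ i ∈ Finset.range j, (t (j + 1) - t (i + 1)) := by
      intro j
      calc ∏ i ∈ Finset.range j, (t (i + 1) - t (j + 1))
          = ∏ i ∈ Finset.range j, ((-1) * (t (j + 1) - t (i + 1))) :=
            Finset.prod_congr rfl fun i _ => by ring
        _ = (-1 : R) ^ j * ∏ i ∈ Finset.range j, (t (j + 1) - t (i + 1)) := by
            rw [Finset.prod_mul_distrib, Finset.prod_const, Finset.card_range]
    rw [Finset.prod_congr rfl fun j _ => step j, Finset.prod_mul_distrib,
      Finset.prod_pow_eq_pow_sum, Finset.sum_range_id, hE]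
  rw [hvand]
  ring

/-- For odd `n`,
`s_{ρ_{n-1}+1^{n-1}}(t_2,…,t_n | t_1,-z_1,…,t_{n-1},-z_{n-1})
  = ∏_{j=2}^n (t_j - t_1) · ∏_{1≤i<j≤n}(t_j + z_i)`.
The factorial Schur polynomial in `m = n-1` variables is rendered with denominators
cleared: the determinant of `((x_j|a)^{λ_i+m-i})` (with `λ = ρ_{n-1}+1^{n-1} = (n,…,2)`,
so exponent `2n-2i` in row `i`, variables `x_j = t_{j+1}`, and parameter sequence
`a = (t_1,-z_1,t_2,-z_2,…)`) equals the Vandermonde `∏_{2≤i<j≤n}(t_i - t_j)` times the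
right-hand side.  Indices are 0-based: `t k` stands for `t_{k+1}`, `z k` for `z_{k+1}`. -/
theorem stmt_3 {R : Type*} [CommRing R] (n : ℕ) (hn : Odd n) (t z : ℕ → R) :
    Matrix.det (Matrix.of (fun i j : Fin (n - 1) =>
        ∏ m ∈ Finset.range (2 * (n - 1 - (i : ℕ))),
          (t ((j : ℕ) + 1) - (if m % 2 = 0 then t (m / 2) else -z (m / 2)))))
      =
      (∏ p ∈ Finset.univ.filter (fun p : Fin (n - 1) × Fin (n - 1) => p.1 < p.2),
          (t ((p.1 : ℕ) + 1) - t ((p.2 : ℕ) + 1)))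
        * ((∏ j ∈ Finset.range (n - 1), (t (j + 1) - t 0))
            * ∏ p ∈ Finset.univ.filter (fun p : Fin n × Fin n => p.1 < p.2),
                (t (p.2 : ℕ) + z (p.1 : ℕ))) := by
  obtain ⟨N, rfl⟩ : ∃ N, n = N + 1 := ⟨n - 1, by obtain ⟨k, hk⟩ := hn; omega⟩
  exact key_det N t z
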